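/- arXiv:math/0512347 — 6 statements merged into one kernel-verified Lean document; each statement's English description precedes it below -/
import Mathlib

section
/- For every m > 0 and every integer k ∈ ℤ, |sin(m φ(kπ/m))| ≤ m·e^{−|k|π/m}. -/
open Real

/-!
Writing `φ(u) = max u 0 + log (e^{-|u|} + 1)`, the value `m φ(kπ/m)` is the integer multiple
`max k 0 · π` of `π` plus `m log (e^{-|k|π/m} + 1)`. The multiple of `π` does not change `|sin|`,
and `|sin x| ≤ |x|` together with `log (1 + y) ≤ y` bounds the rest by `m e^{-|k|π/m}`.
-/

namespace Real

lemma abs_sin_int_mul_pi_add (n : ℤ) (x : ℝ) : |sin (n * π + x)| = |sin x| := by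
  rw [add_comm, sin_add_int_mul_pi, abs_mul, abs_neg_one_zpow, one_mul]

lemma log_add_one_le_self {x : ℝ} (hx : -1 < x) : log (x + 1) ≤ x := by
  linarith [log_le_sub_one_of_pos (show 0 < x + 1 by linarith)]

lemma log_exp_add_one_eq (u : ℝ) : log (exp u + 1) = max u 0 + log (exp (-|u|) + 1) := by
  rcases le_total 0 u with hu | hu
  · have hfactor : exp u + 1 = exp u * (exp (-u) + 1) := by
      rw [mul_add, ← exp_add, add_neg_cancel, exp_zero, mul_one, add_comm]
    rw [max_eq_left hu, abs_of_nonneg hu, hfactor, log_mul (exp_ne_zero u) (by positivity),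
      log_exp]
  · rw [max_eq_right hu, abs_of_nonpos hu, neg_neg, zero_add]

end Real

/-- For φ(u) = log(e^u + 1), m > 0 and k ∈ ℤ:
|sin(m φ(kπ/m))| ≤ m·e^{−|k|π/m}. -/
theorem abs_sin_m_phi_le (m : ℝ) (hm : 0 < m) (k : ℤ) :
    |Real.sin (m * Real.log (Real.exp (k * Real.pi / m) + 1))| ≤
      m * Real.exp (-(|k| * Real.pi / m)) := by
  set u : ℝ := k * π / m
  have hinteger : m * max u 0 = (max k 0 : ℤ) * π := by
    rw [mul_max_of_nonneg _ _ hm.le, Int.cast_max, Int.cast_zero, max_mul_of_nonneg _ _ pi_pos.le,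
      mul_zero, zero_mul, mul_div_cancel₀ _ hm.ne']
  have habs : |u| = |k| * π / m := by
    rw [abs_div, abs_mul, abs_of_pos pi_pos, abs_of_pos hm, Int.cast_abs]
  have hlog_nonneg : 0 ≤ log (exp (-|u|) + 1) := log_nonneg (by linarith [exp_pos (-|u|)])
  calc |sin (m * log (exp u + 1))|
      = |sin (m * log (exp (-|u|) + 1))| := by
        rw [log_exp_add_one_eq, mul_add, hinteger, abs_sin_int_mul_pi_add]
    _ ≤ |m * log (exp (-|u|) + 1)| := abs_sin_le_abs
    _ = m * log (exp (-|u|) + 1) := abs_of_nonneg (mul_nonneg hm.le hlog_nonneg)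
    _ ≤ m * exp (-(|k| * π / m)) := by
        rw [← habs]
        gcongr
        exact log_add_one_le_self (by linarith [exp_pos (-|u|)])
end

section
/- Let f : ℝ → ℝ, t > 0, m > 0, and let C_f ≥ 0 satisfy |f(x)| ≤ C_f for all x > 0. Then for every natural number n ≥ 1, the tail of the trapezoidal sum satisfies (π/m) · Σ_{k ∈ ℤ, |k| > n} |F_m(kπ/m)| ≤ (2 C_f m² / t) · e^{−nπ/m}. In particular |T_m − T_{n,m}| ≤ (2 C_f m² / t) e^{−nπ/m}, where T_m = (π/m) Σ_{k∈ℤ} F_m(kπ/m) and T_{n,m} = (π/m) Σ_{k=−n}^{n} F_m(kπ/m). -/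
/-! At the nodes `u = kπ/m` the number `m · max u 0` is a multiple of `π`, and
`log (eᵘ + 1) - max u 0 = log (1 + e^{-|u|}) ∈ [0, e^{-|u|}]`; hence
`|sin (m φ(u))| ≤ m e^{-|u|}` and, as `|f| ≤ C_f` and `φ' ≤ 1`,
`|F_m(kπ/m)| ≤ (C_f m² / t) r^{|k|}` with `r = e^{-π/m}`. The tail `|k| > n` is then dominated
by two geometric series with sum `2 r^{n+1} / (1 - r)`, and `(π/m) r ≤ 1 - r` is the inequality
`x + 1 ≤ eˣ` at `x = π/m`. -/

open Real

lemma HasSum.int_abs_gt_of_nat_of_neg {M : Type*} [AddCommMonoid M] [TopologicalSpace M]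
    [ContinuousAdd M] {f : ℤ → M} {a b : M} (n : ℕ)
    (h₁ : HasSum (fun i : ℕ ↦ f (n + 1 + i)) a)
    (h₂ : HasSum (fun i : ℕ ↦ f (-(n + 1 + i))) b) :
    HasSum (fun k : {k : ℤ // (n : ℤ) < |k|} ↦ f k) (a + b) := by
  let g : ℕ ⊕ ℕ → {k : ℤ // (n : ℤ) < |k|} := Sum.elim
    (fun i ↦ ⟨n + 1 + i, by rw [abs_of_nonneg (by positivity)]; omega⟩)
    (fun i ↦ ⟨-(n + 1 + i), by rw [abs_neg, abs_of_nonneg (by positivity)]; omega⟩)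
  have hg : Function.Bijective g := by
    refine ⟨?_, fun ⟨k, hk⟩ ↦ ?_⟩
    · rintro (i | i) (j | j) h <;>
        simp only [g, Sum.elim_inl, Sum.elim_inr, Subtype.mk.injEq] at h <;> (congr 1; omega)
    · rw [lt_abs] at hk
      rcases le_or_gt 0 k with h0 | h0
      · exact ⟨.inl (k.toNat - (n + 1)), Subtype.ext (by simp only [g, Sum.elim_inl]; omega)⟩
      · exact ⟨.inr ((-k).toNat - (n + 1)),
          Subtype.ext (by simp only [g, Sum.elim_inr]; omega)⟩
  rw [← (Equiv.ofBijective g hg).hasSum_iff]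
  exact HasSum.sum h₁ h₂

lemma norm_tsum_sub_sum_Icc_le {E : Type*} [NormedAddCommGroup E] [CompleteSpace E] {f : ℤ → E}
    (hf : Summable fun k ↦ ‖f k‖) (n : ℕ) :
    ‖∑' k, f k - ∑ k ∈ Finset.Icc (-(n : ℤ)) n, f k‖ ≤
      ∑' k : {k : ℤ // (n : ℤ) < |k|}, ‖f k‖ := by
  have hcompl : (fun k : ℤ ↦ k ∉ Finset.Icc (-(n : ℤ)) n) = fun k ↦ (n : ℤ) < |k| := by
    ext k
    rw [Finset.mem_Icc, lt_abs]
    omega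
  rw [← (hf.of_norm).sum_add_tsum_subtype_compl (Finset.Icc (-(n : ℤ)) n), add_sub_cancel_left,
    hcompl]
  exact norm_tsum_le_tsum_norm (hf.subtype _)

lemma summable_pow_natAbs {r : ℝ} (hr0 : 0 ≤ r) (hr1 : r < 1) :
    Summable fun k : ℤ ↦ r ^ k.natAbs :=
  .of_nat_of_neg (by simpa using summable_geometric_of_lt_one hr0 hr1)
    (by simpa using summable_geometric_of_lt_one hr0 hr1)

lemma hasSum_pow_natAbs_of_lt_abs {r : ℝ} (hr0 : 0 ≤ r) (hr1 : r < 1) (n : ℕ) :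
    HasSum (fun k : {k : ℤ // (n : ℤ) < |k|} ↦ r ^ (k : ℤ).natAbs)
      (2 * (r ^ (n + 1) / (1 - r))) := by
  have hgeom : HasSum (fun i : ℕ ↦ r ^ (n + 1 + i)) (r ^ (n + 1) / (1 - r)) := by
    simpa only [pow_add, div_eq_mul_inv] using (hasSum_geometric_of_lt_one hr0 hr1).mul_left _
  rw [two_mul]
  refine HasSum.int_abs_gt_of_nat_of_neg (f := fun k : ℤ ↦ r ^ k.natAbs) n ?_ ?_ <;>
    convert hgeom using 3 <;> omega

lemma summable_abs_of_abs_le_mul_pow_natAbs {g : ℤ → ℝ} {C r : ℝ} (hr0 : 0 ≤ r)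
    (hr1 : r < 1) (hg : ∀ k, |g k| ≤ C * r ^ k.natAbs) : Summable fun k ↦ |g k| :=
  ((summable_pow_natAbs hr0 hr1).mul_left C).of_nonneg_of_le (fun _ ↦ abs_nonneg _) hg

lemma mul_exp_neg_le_one_sub_exp_neg (x : ℝ) : x * exp (-x) ≤ 1 - exp (-x) := by
  have h := mul_le_mul_of_nonneg_right (add_one_le_exp x) (exp_pos (-x)).le
  rwa [← exp_add, add_neg_cancel, exp_zero, add_mul, one_mul, ← le_sub_iff_add_le] at h

lemma mul_exp_neg_pow_succ_div_le {x : ℝ} (hx : 0 < x) (n : ℕ) :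
    x * (exp (-x) ^ (n + 1) / (1 - exp (-x))) ≤ exp (-x) ^ n := by
  have h1 : 0 < 1 - exp (-x) := sub_pos.2 (exp_lt_one_iff.2 (neg_lt_zero.2 hx))
  rw [mul_div_assoc', div_le_iff₀ h1, pow_succ, mul_left_comm]
  exact mul_le_mul_of_nonneg_left (mul_exp_neg_le_one_sub_exp_neg x) (by positivity)

lemma mul_tsum_abs_of_lt_abs_le {g : ℤ → ℝ} {C x : ℝ} (hx : 0 < x)
    (hg : ∀ k, |g k| ≤ C * exp (-x) ^ k.natAbs) (n : ℕ) :
    x * ∑' k : {k : ℤ // (n : ℤ) < |k|}, |g k| ≤ 2 * C * exp (-x) ^ n := by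
  have hC : 0 ≤ C := by simpa using (abs_nonneg _).trans (hg 0)
  have hr1 : exp (-x) < 1 := exp_lt_one_iff.2 (neg_lt_zero.2 hx)
  have hmajorant := (hasSum_pow_natAbs_of_lt_abs (exp_pos _).le hr1 n).mul_left C
  have hsum := summable_abs_of_abs_le_mul_pow_natAbs (exp_pos _).le hr1 hg
  calc x * ∑' k : {k : ℤ // (n : ℤ) < |k|}, |g k|
      ≤ x * ∑' k : {k : ℤ // (n : ℤ) < |k|}, C * exp (-x) ^ (k : ℤ).natAbs :=
        mul_le_mul_of_nonneg_left
          (Summable.tsum_le_tsum (fun k ↦ hg k) (hsum.subtype _) hmajorant.summable) hx.le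
    _ = C * (2 * (x * (exp (-x) ^ (n + 1) / (1 - exp (-x))))) := by
        rw [hmajorant.tsum_eq]; ring
    _ ≤ C * (2 * exp (-x) ^ n) := by
        gcongr
        exact mul_exp_neg_pow_succ_div_le hx n
    _ = 2 * C * exp (-x) ^ n := by ring

lemma abs_log_one_add_le {x : ℝ} (hx : 0 ≤ x) : |log (1 + x)| ≤ x := by
  rw [abs_of_nonneg (log_nonneg (by linarith))]
  linarith [log_le_sub_one_of_pos (by linarith : 0 < 1 + x)]

lemma abs_log_exp_add_one_sub_max_le (u : ℝ) : |log (exp u + 1) - max u 0| ≤ exp (-|u|) := by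
  rcases le_total 0 u with hu | hu
  · have hsplit : exp u + 1 = exp u * (1 + exp (-u)) := by
      rw [mul_add, mul_one, ← exp_add, add_neg_cancel, exp_zero]
    rw [max_eq_left hu, abs_of_nonneg hu, hsplit, log_mul (exp_ne_zero u) (by positivity),
      log_exp, add_sub_cancel_left]
    exact abs_log_one_add_le (exp_pos _).le
  · rw [max_eq_right hu, abs_of_nonpos hu, neg_neg, sub_zero, add_comm]
    exact abs_log_one_add_le (exp_pos _).le

lemma abs_sin_mul_log_exp_add_one_le {m u : ℝ} (hm : 0 ≤ m) (hu : sin (m * max u 0) = 0) :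
    |sin (m * log (exp u + 1))| ≤ m * exp (-|u|) :=
  calc |sin (m * log (exp u + 1))| = |sin (m * log (exp u + 1)) - sin (m * max u 0)| := by
        rw [hu, sub_zero]
    _ ≤ |m * log (exp u + 1) - m * max u 0| := abs_sin_sub_sin_le _ _
    _ = m * |log (exp u + 1) - max u 0| := by rw [← mul_sub, abs_mul, abs_of_nonneg hm]
    _ ≤ m * exp (-|u|) := by gcongr; exact abs_log_exp_add_one_sub_max_le u

lemma sin_mul_max_int_mul_pi_div_eq_zero {m : ℝ} (hm : 0 < m) (k : ℤ) :
    sin (m * max ((k : ℝ) * π / m) 0) = 0 := by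
  rcases le_total 0 k with hk | hk
  · rw [max_eq_left (by positivity), mul_div_cancel₀ _ hm.ne', sin_int_mul_pi]
  · have hu : (k : ℝ) * π / m ≤ 0 :=
      div_nonpos_of_nonpos_of_nonneg (mul_nonpos_of_nonpos_of_nonneg (by exact_mod_cast hk)
        pi_pos.le) hm.le
    rw [max_eq_right hu, mul_zero, sin_zero]

lemma exp_neg_abs_int_mul {a : ℝ} (ha : 0 ≤ a) (k : ℤ) :
    exp (-|k * a|) = exp (-a) ^ k.natAbs := by
  rw [← exp_nat_mul, abs_mul, abs_of_nonneg ha, Nat.cast_natAbs, Int.cast_abs]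
  ring_nf

lemma abs_mul_sin_mul_log_exp_add_one_le {f : ℝ → ℝ} {t m C_f u : ℝ} (ht : 0 < t)
    (hm : 0 < m) (hf : ∀ x, 0 < x → |f x| ≤ C_f) (hu : sin (m * max u 0) = 0) :
    |f (m / t * log (exp u + 1)) * sin (m * log (exp u + 1)) * (m / t * (exp u / (exp u + 1)))|
      ≤ C_f * m ^ 2 / t * exp (-|u|) := by
  have hCf : 0 ≤ C_f := (abs_nonneg _).trans (hf 1 one_pos)
  have hf_le : |f (m / t * log (exp u + 1))| ≤ C_f :=
    hf _ (mul_pos (div_pos hm ht) (log_pos (by linarith [exp_pos u])))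
  have hweight : exp u / (exp u + 1) ≤ 1 := (div_le_one (by positivity)).2 (by linarith)
  rw [abs_mul, abs_mul, abs_of_nonneg (by positivity : 0 ≤ m / t * (exp u / (exp u + 1)))]
  calc _ ≤ C_f * (m * exp (-|u|)) * (m / t * 1) := by
        gcongr
        exact abs_sin_mul_log_exp_add_one_le hm.le hu
    _ = C_f * m ^ 2 / t * exp (-|u|) := by ring

theorem trapezoidal_truncation_error_general (f : ℝ → ℝ) (t m : ℝ) (ht : 0 < t) (hm : 0 < m)
    (C_f : ℝ) (hf : ∀ x : ℝ, 0 < x → |f x| ≤ C_f)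
    (F : ℝ → ℝ)
    (hF : ∀ u : ℝ, F u = f (m / t * Real.log (Real.exp u + 1)) *
      Real.sin (m * Real.log (Real.exp u + 1)) * (m / t * (Real.exp u / (Real.exp u + 1))))
    (n : ℕ) :
    Real.pi / m * (∑' k : {k : ℤ // (n : ℤ) < |k|}, |F (((k : ℤ) : ℝ) * Real.pi / m)|) ≤
      2 * C_f * m ^ 2 / t * Real.exp (-(n * Real.pi / m)) ∧
    |Real.pi / m * (∑' k : ℤ, F ((k : ℝ) * Real.pi / m)) -
        Real.pi / m * (∑ k ∈ Finset.Icc (-(n : ℤ)) (n : ℤ), F ((k : ℝ) * Real.pi / m))| ≤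
      2 * C_f * m ^ 2 / t * Real.exp (-(n * Real.pi / m)) := by
  have hπm : 0 < π / m := div_pos pi_pos hm
  have hbound : ∀ k : ℤ, |F (k * π / m)| ≤ C_f * m ^ 2 / t * exp (-(π / m)) ^ k.natAbs :=
    fun k ↦ hF _ ▸ (abs_mul_sin_mul_log_exp_add_one_le ht hm hf
      (sin_mul_max_int_mul_pi_div_eq_zero hm k)).trans_eq
        (by rw [mul_div_assoc (k : ℝ), exp_neg_abs_int_mul hπm.le])
  have htail : _ ≤ 2 * C_f * m ^ 2 / t * exp (-(n * π / m)) :=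
    (mul_tsum_abs_of_lt_abs_le hπm hbound n).trans_eq (by rw [← exp_nat_mul]; ring_nf)
  refine ⟨htail, le_trans ?_ htail⟩
  have hsum := summable_abs_of_abs_le_mul_pow_natAbs (exp_pos _).le
    (exp_lt_one_iff.2 (neg_lt_zero.2 hπm)) hbound
  rw [← mul_sub, abs_mul, abs_of_pos hπm]
  gcongr
  simpa only [Real.norm_eq_abs] using norm_tsum_sub_sum_Icc_le (f := fun k : ℤ ↦ F (k * π / m))
    (by simpa only [Real.norm_eq_abs] using hsum) n

/-- Truncation error of the trapezoidal sum for the transformed Fourier sine integral,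
where F_m(u) = f((m/t)φ(u))·sin(m φ(u))·(m/t)φ'(u) and φ(u) = log(e^u + 1):
the tail of the sum over |k| > n is bounded by (2 C_f m²/t)·e^{−nπ/m}, and hence so is
|T_m − T_{n,m}|. -/
theorem trapezoidal_truncation_error (f : ℝ → ℝ) (t m : ℝ) (ht : 0 < t) (hm : 0 < m)
    (C_f : ℝ) (hCf : 0 ≤ C_f) (hf : ∀ x : ℝ, 0 < x → |f x| ≤ C_f)
    (F : ℝ → ℝ)
    (hF : ∀ u : ℝ, F u = f (m / t * Real.log (Real.exp u + 1)) *
      Real.sin (m * Real.log (Real.exp u + 1)) * (m / t * (Real.exp u / (Real.exp u + 1))))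
    (n : ℕ) (hn : 1 ≤ n) :
    Real.pi / m * (∑' k : {k : ℤ // (n : ℤ) < |k|}, |F (((k : ℤ) : ℝ) * Real.pi / m)|) ≤
      2 * C_f * m ^ 2 / t * Real.exp (-(n * Real.pi / m)) ∧
    |Real.pi / m * (∑' k : ℤ, F ((k : ℝ) * Real.pi / m)) -
        Real.pi / m * (∑ k ∈ Finset.Icc (-(n : ℤ)) (n : ℤ), F ((k : ℝ) * Real.pi / m))| ≤
      2 * C_f * m ^ 2 / t * Real.exp (-(n * Real.pi / m)) :=
  trapezoidal_truncation_error_general f t m ht hm C_f hf F hF n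
end

section
/- Let a ∈ ℝ, b > 0, t > 0, m > 0 with bt/m < π, and let w₀ = Log(e^{(a+ib)t/m} − 1). Then w₀ is a simple pole of F_m with lim_{w → w₀, w ≠ w₀} (w − w₀) · F_m(w) = sin((a+ib)t)/(2ib). -/
open Complex Filter Topology

/-! With φ(w) = Log(eʷ + 1) and c = (a + ib)t/m, the hypothesis 0 < Im c < π makes Log invert exp
at c, so φ(w₀) = c. The denominator factors as ((m/t)φ − (a + ib))((m/t)φ − (a − ib)); the first
factor has a simple zero at w₀ with derivative (m/t)φ'(w₀), which cancels against the numerator's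
factor (m/t)φ'(w₀), while the second factor equals 2ib there. -/

theorem tendsto_sub_mul_div_nhdsNE_of_hasDerivAt {𝕜 : Type*} [NontriviallyNormedField 𝕜]
    {N g : 𝕜 → 𝕜} {w₀ d : 𝕜} (hN : ContinuousAt N w₀) (hg : HasDerivAt g d w₀)
    (hg₀ : g w₀ = 0) (hd : d ≠ 0) :
    Tendsto (fun w => (w - w₀) * (N w / g w)) (𝓝[≠] w₀) (𝓝 (N w₀ / d)) := by
  have hslope : Tendsto (fun w => g w / (w - w₀)) (𝓝[≠] w₀) (𝓝 d) := by
    refine (hasDerivAt_iff_tendsto_slope.mp hg).congr fun w => ?_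
    rw [slope_def_field, hg₀, sub_zero]
  refine ((hN.tendsto.mono_left nhdsWithin_le_nhds).div hslope hd).congr fun w => ?_
  rw [Pi.div_apply, div_div_eq_mul_div, mul_comm, mul_div_assoc]

theorem hasDerivAt_log_exp_add_one {w : ℂ} (hw : exp w + 1 ∈ slitPlane) :
    HasDerivAt (fun w => log (exp w + 1)) (exp w / (exp w + 1)) w := by
  simpa [div_eq_inv_mul] using ((hasDerivAt_exp w).add_const 1).clog hw

theorem exp_im_pos {c : ℂ} (h₀ : 0 < c.im) (hπ : c.im < Real.pi) : 0 < (exp c).im := by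
  rw [exp_im]
  exact mul_pos (Real.exp_pos _) (Real.sin_pos_of_pos_of_lt_pi h₀ hπ)

theorem exp_log_exp_sub_one_add_one {c : ℂ} (h₀ : 0 < c.im) (hπ : c.im < Real.pi) :
    exp (log (exp c - 1)) + 1 = exp c := by
  have hexp := exp_im_pos h₀ hπ
  rw [exp_log (sub_ne_zero.mpr fun h => by simp [h] at hexp), sub_add_cancel]

theorem sq_sub_add_sq_eq_mul (x a b : ℂ) :
    (x - a) ^ 2 + b ^ 2 = (x - (a + I * b)) * (x - (a - I * b)) := by
  ring_nf; rw [I_sq]; ring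

/-- For F_m(w) = sin(m φ(w))·(m/t)φ'(w)/(((m/t)φ(w) − a)² + b²) with φ(w) = Log(e^w + 1),
and bt/m < π, the point w₀ = Log(e^{(a+ib)t/m} − 1) is a simple pole of F_m with residue
sin((a+ib)t)/(2ib):  lim_{w → w₀, w ≠ w₀} (w − w₀)·F_m(w) = sin((a+ib)t)/(2ib). -/
theorem residue_of_transformed_integrand (a b t m : ℝ) (hb : 0 < b) (ht : 0 < t)
    (hm : 0 < m) (hbt : b * t / m < Real.pi) :
    Tendsto (fun w : ℂ =>
        (w - Complex.log (Complex.exp (((a : ℂ) + Complex.I * b) * t / m) - 1)) *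
          (Complex.sin ((m : ℂ) * Complex.log (Complex.exp w + 1)) *
              ((m : ℂ) / t * (Complex.exp w / (Complex.exp w + 1))) /
            (((m : ℂ) / t * Complex.log (Complex.exp w + 1) - a) ^ 2 + (b : ℂ) ^ 2)))
      (𝓝[≠] Complex.log (Complex.exp (((a : ℂ) + Complex.I * b) * t / m) - 1))
      (𝓝 (Complex.sin (((a : ℂ) + Complex.I * b) * t) / (2 * Complex.I * b))) := by
  have hm₀ : (m : ℂ) ≠ 0 := ofReal_ne_zero.mpr hm.ne'
  have ht₀ : (t : ℂ) ≠ 0 := ofReal_ne_zero.mpr ht.ne'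
  set c : ℂ := ((a : ℂ) + I * b) * t / m
  set w₀ := log (exp c - 1)
  have hc₀ : 0 < c.im := by simpa [c] using (by positivity : 0 < b * t / m)
  have hcπ : c.im < Real.pi := by simpa [c] using hbt
  have hE : exp w₀ + 1 = exp c := exp_log_exp_sub_one_add_one hc₀ hcπ
  have hφ₀ : log (exp w₀ + 1) = c := by rw [hE, log_exp (by linarith [Real.pi_pos]) hcπ.le]
  have hφ := hasDerivAt_log_exp_add_one
    (hE ▸ mem_slitPlane_iff.mpr (Or.inr (exp_im_pos hc₀ hcπ).ne'))
  have hmc : (m : ℂ) * c = (a + I * b) * t := by simp only [c]; field_simp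
  have hmtc : (m : ℂ) / t * c = a + I * b := by
    rw [div_mul_eq_mul_div, hmc, mul_div_cancel_right₀ _ ht₀]
  have h2ib : (a + I * b : ℂ) - (a - I * b) = 2 * I * b := by ring
  have hd : (m : ℂ) / t * (exp w₀ / (exp w₀ + 1)) ≠ 0 :=
    mul_ne_zero (div_ne_zero hm₀ ht₀) (div_ne_zero (exp_ne_zero _) (hE ▸ exp_ne_zero _))
  have hden : (m : ℂ) / t * log (exp w₀ + 1) - (a - I * b) ≠ 0 := by
    rw [hφ₀, hmtc, h2ib]
    exact mul_ne_zero (mul_ne_zero two_ne_zero I_ne_zero) (ofReal_ne_zero.mpr hb.ne')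
  have hN : ContinuousAt (fun w => sin (m * log (exp w + 1)) * (m / t * (exp w / (exp w + 1))) /
      ((m : ℂ) / t * log (exp w + 1) - (a - I * b))) w₀ := by
    have hφc := hφ.continuousAt
    have hsin := continuous_sin
    have hE₀ : exp w₀ + 1 ≠ 0 := hE ▸ exp_ne_zero c
    fun_prop (disch := assumption)
  have key := tendsto_sub_mul_div_nhdsNE_of_hasDerivAt hN
    ((hφ.const_mul ((m : ℂ) / t)).sub_const (a + I * b)) (by rw [hφ₀, hmtc, sub_self]) hd
  convert key using 2 with w
  · rw [sq_sub_add_sq_eq_mul, div_div, mul_comm (_ - (a - I * b))]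
  · rw [hφ₀, hmc, hmtc, h2ib, mul_div_right_comm, mul_div_cancel_right₀ _ hd]
end

section
/- Let a ∈ ℝ, b > 0 and t > 0. Then Im(Log(e^{(a+ib)t/m} − 1)) → arg(a + ib) as the real parameter m → ∞. In particular the limit equals arctan(b/a) if a > 0, equals π/2 if a = 0, and equals π − arctan(b/|a|) if a < 0. -/
open Complex Filter Topology

/-!
For small `s > 0` the quotient `(exp (z * s) - 1) / s` is close to the derivative `z` of
`s ↦ exp (z * s)` at `0`, and dividing by the positive real `s` does not change the argument.
Since `arg` is continuous on the slit plane, `arg (exp (z * s) - 1) → arg z` as `s → 0⁺`;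
the imaginary part of `log` is `arg`, and `s = t / m → 0⁺` as `m → ∞`.
-/

namespace Complex

theorem tendsto_inv_smul_exp_mul_sub_one (z : ℂ) :
    Tendsto (fun s : ℝ => s⁻¹ • (exp (z * s) - 1)) (𝓝[≠] 0) (𝓝 z) := by
  have hderiv : HasDerivAt (fun s : ℝ => exp (z * s)) z 0 := by
    have : HasDerivAt (fun w : ℂ => exp (z * w)) z 0 := by
      simpa using ((hasDerivAt_id (0 : ℂ)).const_mul z).cexp
    exact_mod_cast this.comp_ofReal
  exact (hasDerivAt_iff_tendsto_slope.mp hderiv).congr fun s => by simp [slope_def_module]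

theorem tendsto_arg_exp_mul_sub_one {z : ℂ} (hz : z ∈ slitPlane) :
    Tendsto (fun s : ℝ => arg (exp (z * s) - 1)) (𝓝[>] 0) (𝓝 (arg z)) := by
  refine ((continuousAt_arg hz).tendsto.comp
    ((tendsto_inv_smul_exp_mul_sub_one z).mono_left (nhdsGT_le_nhdsNE 0))).congr' ?_
  filter_upwards [self_mem_nhdsWithin] with s (hs : 0 < s)
  rw [Function.comp_apply, real_smul, arg_real_mul _ (inv_pos.mpr hs)]

theorem tendsto_im_log_exp_mul_div_sub_one {z : ℂ} (hz : z ∈ slitPlane) {t : ℝ} (ht : 0 < t) :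
    Tendsto (fun m : ℝ => (log (exp (z * t / m) - 1)).im) atTop (𝓝 (arg z)) := by
  have hdiv : Tendsto (fun m : ℝ => t / m) atTop (𝓝[>] 0) :=
    tendsto_nhdsWithin_iff.mpr ⟨tendsto_const_nhds.div_atTop tendsto_id,
      eventually_gt_atTop 0 |>.mono fun m hm => div_pos ht hm⟩
  refine ((tendsto_arg_exp_mul_sub_one hz).comp hdiv).congr fun m => ?_
  simp [log_im, mul_div_assoc]

theorem arg_eq_arctan_of_re_pos {z : ℂ} (hz : 0 < z.re) : arg z = Real.arctan (z.im / z.re) := by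
  have h := abs_lt.mp (abs_arg_lt_pi_div_two_iff.mpr (Or.inl hz))
  rw [← tan_arg, Real.arctan_tan h.1 h.2]

theorem arg_eq_pi_sub_arctan_of_re_neg_of_im_pos {z : ℂ} (hre : z.re < 0) (him : 0 < z.im) :
    arg z = Real.pi - Real.arctan (z.im / -z.re) := by
  have h := arg_neg_eq_arg_sub_pi_of_im_pos him
  rw [arg_eq_arctan_of_re_pos (by simpa using hre)] at h
  simp only [neg_im, neg_re, neg_div_neg_eq] at h
  rw [div_neg, Real.arctan_neg]
  linarith

end Complex

/-- As m → ∞, the imaginary part v₀ of w₀ = Log(e^{(a+ib)t/m} − 1) tends to arg(a+ib),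
which is arctan(b/a) for a > 0, π/2 for a = 0, and π − arctan(b/|a|) for a < 0. -/
theorem v0_tendsto_arg (a b t : ℝ) (hb : 0 < b) (ht : 0 < t) :
    Tendsto (fun m : ℝ =>
        (Complex.log (Complex.exp (((a : ℂ) + Complex.I * b) * t / m) - 1)).im) atTop
      (𝓝 (Complex.arg ((a : ℂ) + Complex.I * b))) ∧
    (0 < a → Complex.arg ((a : ℂ) + Complex.I * b) = Real.arctan (b / a)) ∧
    (a = 0 → Complex.arg ((a : ℂ) + Complex.I * b) = Real.pi / 2) ∧
    (a < 0 → Complex.arg ((a : ℂ) + Complex.I * b) = Real.pi - Real.arctan (b / |a|)) := by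
  set z : ℂ := (a : ℂ) + Complex.I * b
  have hre : z.re = a := by simp [z]
  have him : z.im = b := by simp [z]
  refine ⟨tendsto_im_log_exp_mul_div_sub_one (Or.inr (him ▸ hb.ne')) ht, fun ha => ?_,
    fun ha => ?_, fun ha => ?_⟩
  · rw [arg_eq_arctan_of_re_pos (hre ▸ ha), hre, him]
  · exact arg_eq_pi_div_two_iff.mpr ⟨hre.trans ha, him ▸ hb⟩
  · rw [arg_eq_pi_sub_arctan_of_re_neg_of_im_pos (hre ▸ ha) (him ▸ hb), hre, him, abs_of_neg ha]
end

section
/- Let a ∈ ℝ, b > 0 and t > 0. Then m · ( Im(Log(e^{(a+ib)t/m} − 1)) − arg(a + ib) ) → bt/2 as the real parameter m → ∞; that is, v₀ = arg(a+ib) + bt/(2m) + o(1/m). -/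
/-!
With `z = c / m` and `v = (exp z - 1) / z → 1`, we have `exp z - 1 = z * v` and `arg z = arg c`;
once `arg v` is small the principal logarithm is additive on this product, so
`Im log (exp z - 1) - arg c = Im log v`. Since `exp z - 1 - z ~ z² / 2`, `log v ~ v - 1 ~ z / 2`,
whence `m * Im log v → Im (c / 2)`. For the theorem, `c = (a + i b) t`.
-/

open Complex Filter Topology

namespace Complex

theorem tendsto_exp_sub_one_sub_self_div_sq :
    Tendsto (fun z : ℂ => (exp z - 1 - z) / z ^ 2) (𝓝[≠] 0) (𝓝 (1 / 2)) := by
  have h := ((exp_sub_sum_range_succ_isLittleO_pow 2).tendsto_div_nhds_zero.mono_left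
    (nhdsWithin_le_nhds (s := {0}ᶜ))).add_const (1 / 2 : ℂ)
  rw [zero_add] at h
  refine h.congr' (eventually_mem_nhdsWithin.mono fun z (hz : z ≠ 0) => ?_)
  simp only [Finset.sum_range_succ, Finset.sum_range_zero]
  field_simp
  norm_num
  ring

theorem tendsto_exp_sub_one_div_self :
    Tendsto (fun z : ℂ => (exp z - 1) / z) (𝓝[≠] 0) (𝓝 1) := by
  have h := hasDerivAt_iff_tendsto_slope.1 (hasDerivAt_exp 0)
  rw [exp_zero] at h
  exact h.congr fun z => by rw [slope_def_field, exp_zero, sub_zero]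

theorem tendsto_log_exp_sub_one_div_self_div_self :
    Tendsto (fun z : ℂ => log ((exp z - 1) / z) / z) (𝓝[≠] 0) (𝓝 (1 / 2)) := by
  have hu_sub : ∀ z ≠ (0 : ℂ), (exp z - 1) / z - 1 = z * ((exp z - 1 - z) / z ^ 2) :=
    fun z hz => by field_simp
  -- `log v = (v - 1) * dslope log 1 v`, and `dslope log 1` is continuous at `1` with value `1`.
  have hslope : Tendsto (dslope log 1) (𝓝 1) (𝓝 1) := by
    have h := (continuousAt_dslope_same.2 (differentiableAt_log one_mem_slitPlane)).tendsto
    rwa [dslope_same, (hasDerivAt_log one_mem_slitPlane).deriv, inv_one] at h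
  have h := (hslope.comp tendsto_exp_sub_one_div_self).mul tendsto_exp_sub_one_sub_self_div_sq
  rw [one_mul] at h
  refine h.congr' (eventually_mem_nhdsWithin.mono fun z (hz : z ≠ 0) => ?_)
  have hlog := sub_smul_dslope_of_zero log_one ((exp z - 1) / z)
  rw [smul_eq_mul, hu_sub z hz] at hlog
  simp only [Function.comp_apply]
  rw [← hlog]
  field_simp

theorem log_mul_of_abs_arg_add_abs_arg_lt {x y : ℂ} (hx : x ≠ 0) (hy : y ≠ 0)
    (h : |arg x| + |arg y| < Real.pi) : log (x * y) = log x + log y := by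
  refine log_mul hx hy ⟨?_, ?_⟩ <;>
  · cases abs_lt.1 (lt_of_le_of_lt (abs_add_le (arg x) (arg y)) h)
    linarith

theorem tendsto_mul_im_log_exp_div_sub_one_sub_arg {c : ℂ} (hc : c ∈ slitPlane) :
    Tendsto (fun m : ℝ => m * ((log (exp (c / m) - 1)).im - arg c)) atTop (𝓝 (c.im / 2)) := by
  have hc0 : c ≠ 0 := slitPlane_ne_zero hc
  have hm_pos : ∀ᶠ m : ℝ in atTop, 0 < m := eventually_gt_atTop 0
  have hz : Tendsto (fun m : ℝ => c / m) atTop (𝓝[≠] 0) := by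
    have h := ((continuous_ofReal.tendsto 0).comp tendsto_inv_atTop_zero).const_mul c
    rw [ofReal_zero, mul_zero] at h
    refine tendsto_nhdsWithin_iff.2 ⟨h.congr fun m => ?_, hm_pos.mono fun m hm => ?_⟩
    · simp [div_eq_mul_inv]
    · exact div_ne_zero hc0 (ofReal_ne_zero.2 hm.ne')
  have hL := tendsto_log_exp_sub_one_div_self_div_self.comp hz
  have hmL : Tendsto (fun m : ℝ => (m : ℂ) * log ((exp (c / m) - 1) / (c / m))) atTop
      (𝓝 (c / 2)) := by
    have h := hL.const_mul c
    rw [mul_one_div] at h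
    refine h.congr' (hm_pos.mono fun m hm => ?_)
    have : (m : ℂ) ≠ 0 := ofReal_ne_zero.2 hm.ne'
    simp only [Function.comp_apply]
    field_simp
  have hu := tendsto_exp_sub_one_div_self.comp hz
  have harg : Tendsto (fun m : ℝ => arg ((exp (c / m) - 1) / (c / m))) atTop (𝓝 0) := by
    have h := (continuousAt_arg one_mem_slitPlane).tendsto.comp hu
    rwa [arg_one] at h
  have hθ : |arg c| < Real.pi :=
    abs_lt.2 ⟨neg_pi_lt_arg c, (arg_le_pi c).lt_of_ne (slitPlane_arg_ne_pi hc)⟩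
  have h := (continuous_im.tendsto _).comp hmL
  rw [div_ofNat_im] at h
  refine h.congr' ?_
  filter_upwards [hm_pos, harg.eventually (eventually_abs_sub_lt 0 (sub_pos.2 hθ)),
    hu.eventually_ne one_ne_zero] with m hm hsmall hu0
  have hzm : c / m ≠ 0 := div_ne_zero hc0 (ofReal_ne_zero.2 hm.ne')
  simp only [Function.comp_apply] at hu0 hsmall ⊢
  set v := (exp (c / m) - 1) / (c / m)
  have hexp : exp (c / m) - 1 = c / m * v := (mul_div_cancel₀ _ hzm).symm
  have hargz : arg (c / m) = arg c := by
    rw [div_eq_mul_inv, ← ofReal_inv, arg_mul_real (inv_pos.2 hm)]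
  rw [sub_zero] at hsmall
  rw [hexp, log_mul_of_abs_arg_add_abs_arg_lt hzm hu0 (by rw [hargz]; linarith),
    im_ofReal_mul, add_im, log_im, log_im, hargz, add_sub_cancel_left]

end Complex

/-- Second-order behaviour of v₀ = Im(Log(e^{(a+ib)t/m} − 1)):
m·(v₀ − arg(a+ib)) → bt/2 as m → ∞, i.e. v₀ = arg(a+ib) + bt/(2m) + o(1/m). -/
theorem v0_second_order (a b t : ℝ) (hb : 0 < b) (ht : 0 < t) :
    Tendsto (fun m : ℝ =>
        m * ((Complex.log (Complex.exp (((a : ℂ) + Complex.I * b) * t / m) - 1)).im -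
          Complex.arg ((a : ℂ) + Complex.I * b))) atTop (𝓝 (b * t / 2)) := by
  have hc : ((a : ℂ) + I * b) * t ∈ slitPlane :=
    mem_slitPlane_iff.2 (Or.inr (by simp [hb.ne', ht.ne']))
  have h := tendsto_mul_im_log_exp_div_sub_one_sub_arg hc
  rwa [arg_mul_real ht, show (((a : ℂ) + I * b) * t).im = b * t by simp] at h
end

section
/- Let a = 0, b > 0 and t > 0. Then there exist constants C > 0 and M > 0 such that for all real m ≥ M, |R_m| ≤ C · e^{−πm}, i.e. the residue contribution R_m satisfies R_m = O(e^{−πm}) as m → ∞. -/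
/-!
For `a = 0` the numerator of `R_m` collapses to `sin (2 m u₀) · sinh (b t)`, which is bounded
independently of `m`. With `θ = b t / m ∈ (0, π)` the point `e^{iθ} − 1` lies in the closed upper
left quadrant, so `v₀ = arg (e^{iθ} − 1) ≥ π / 2`; the denominator is then at least
`cosh (π m) − 1 ≥ e^{π m} / 4`.
-/

open Complex Real

namespace Complex

theorem pi_div_two_le_arg_exp_mul_I_sub_one {θ : ℝ} (h₀ : 0 < θ) (hπ : θ < π) :
    π / 2 ≤ arg (exp (θ * I) - 1) := by
  have him : 0 < (exp (θ * I) - 1).im := by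
    simpa [exp_ofReal_mul_I_im] using Real.sin_pos_of_pos_of_lt_pi h₀ hπ
  have hre : (exp (θ * I) - 1).re ≤ 0 := by
    simpa [exp_ofReal_mul_I_re] using Real.cos_le_one θ
  refine not_lt.1 fun h => ?_
  rcases arg_lt_pi_div_two_iff.1 h with h | h | h
  · linarith
  · linarith
  · simp [h] at him

end Complex

namespace Real

theorem exp_abs_div_two_le_cosh (x : ℝ) : exp |x| / 2 ≤ cosh x := by
  rw [← cosh_abs, cosh_eq]
  linarith [exp_pos (-|x|)]

theorem exp_div_four_le_cosh_sub_cos {x y : ℝ} (c : ℝ) (hlog : log 4 ≤ y) (hy : y ≤ |x|) :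
    exp y / 4 ≤ cosh x - cos c := by
  have h₄ : 4 ≤ exp y := (log_le_iff_le_exp (by norm_num)).1 hlog
  linarith [exp_le_exp.2 hy, exp_abs_div_two_le_cosh x, cos_le_one c]

theorem abs_sin_mul_div_le {s D E : ℝ} (c : ℝ) (hs : 0 ≤ s) (hE : 0 < E) (hED : E ≤ D) :
    |sin c * s / D| ≤ s / E := by
  rw [abs_div, abs_mul, abs_of_nonneg hs, abs_of_pos (hE.trans_le hED)]
  exact div_le_div₀ hs (mul_le_of_le_one_left hs (abs_sin_le_one c)) hE hED

end Real

theorem residue_contribution_bound_zero_general (a b t : ℝ) (ha : a = 0) (hb : 0 < b) (ht : 0 < t)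
    (u₀ v₀ R : ℝ → ℝ)
    (hv : ∀ m : ℝ, v₀ m =
      (Complex.log (Complex.exp (((a : ℂ) + Complex.I * b) * t / m) - 1)).im)
    (hR : ∀ m : ℝ, R m = Real.pi / b *
      (((Real.exp (-(2 * m * v₀ m)) - Real.cos (2 * m * u₀ m)) * Real.sin (a * t) *
          Real.cosh (b * t) +
        Real.sin (2 * m * u₀ m) * Real.cos (a * t) * Real.sinh (b * t)) /
        (Real.cosh (2 * m * v₀ m) - Real.cos (2 * m * u₀ m)))) :
    ∃ C M : ℝ, 0 < C ∧ 0 < M ∧ ∀ m : ℝ, M ≤ m →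
      |R m| ≤ C * Real.exp (-(Real.pi * m)) := by
  subst ha
  have hbt : 0 < b * t := mul_pos hb ht
  have hsinh : 0 < Real.sinh (b * t) := Real.sinh_pos_iff.2 hbt
  refine ⟨4 * π * Real.sinh (b * t) / b, b * t + 1, by positivity, by positivity, fun m hmM => ?_⟩
  have hm : 1 < m := by linarith
  have hθ : b * t / m < 1 := (div_lt_one (by linarith)).2 (by linarith)
  have hv₀ : π / 2 ≤ v₀ m := by
    have hexp : (((0 : ℝ) : ℂ) + I * b) * t / m = ((b * t / m : ℝ) : ℂ) * I := by
      push_cast; ring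
    rw [hv m, hexp, log_im]
    exact pi_div_two_le_arg_exp_mul_I_sub_one (by positivity) (by linarith [pi_gt_three])
  have hden : Real.exp (π * m) / 4 ≤ Real.cosh (2 * m * v₀ m) - Real.cos (2 * m * u₀ m) := by
    refine exp_div_four_le_cosh_sub_cos _ ?_ ?_
    · linarith [log_le_sub_one_of_pos (by norm_num : (0 : ℝ) < 4), pi_gt_three,
        le_mul_of_one_le_right pi_pos.le hm.le]
    · rw [abs_of_nonneg (by nlinarith [pi_pos])]; nlinarith
  calc |R m| = π / b * |Real.sin (2 * m * u₀ m) * Real.sinh (b * t) /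
        (Real.cosh (2 * m * v₀ m) - Real.cos (2 * m * u₀ m))| := by
        rw [hR m, abs_mul, abs_of_pos (div_pos pi_pos hb)]
        simp only [zero_mul, Real.sin_zero, Real.cos_zero, mul_zero, zero_add, mul_one]
    _ ≤ π / b * (Real.sinh (b * t) / (Real.exp (π * m) / 4)) :=
        mul_le_mul_of_nonneg_left (abs_sin_mul_div_le _ hsinh.le (by positivity) hden)
          (by positivity)
    _ = 4 * π * Real.sinh (b * t) / b * Real.exp (-(π * m)) := by
        rw [Real.exp_neg]; field_simp

/-- For a = 0: the residue contribution R_m (with u₀ + i v₀ = Log(e^{(a+ib)t/m} − 1))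
satisfies R_m = O(e^{−πm}) as m → ∞. -/
theorem residue_contribution_bound_zero (a b t : ℝ) (ha : a = 0) (hb : 0 < b) (ht : 0 < t)
    (u₀ v₀ R : ℝ → ℝ)
    (hu : ∀ m : ℝ, u₀ m =
      (Complex.log (Complex.exp (((a : ℂ) + Complex.I * b) * t / m) - 1)).re)
    (hv : ∀ m : ℝ, v₀ m =
      (Complex.log (Complex.exp (((a : ℂ) + Complex.I * b) * t / m) - 1)).im)
    (hR : ∀ m : ℝ, R m = Real.pi / b *
      (((Real.exp (-(2 * m * v₀ m)) - Real.cos (2 * m * u₀ m)) * Real.sin (a * t) *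
          Real.cosh (b * t) +
        Real.sin (2 * m * u₀ m) * Real.cos (a * t) * Real.sinh (b * t)) /
        (Real.cosh (2 * m * v₀ m) - Real.cos (2 * m * u₀ m)))) :
    ∃ C M : ℝ, 0 < C ∧ 0 < M ∧ ∀ m : ℝ, M ≤ m →
      |R m| ≤ C * Real.exp (-(Real.pi * m)) :=
  residue_contribution_bound_zero_general a b t ha hb ht u₀ v₀ R hv hR
end
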